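/- Let R be a finite irreducible root system with highest root θ, and let α be a long simple root. Then the minimal-length element y_α ∈ W(R) with y_α(α) = θ satisfies ℓ(y_α) = g_R − 2, where g_R is the dual Coxeter number of R. -/

import Mathlib

open scoped RealInnerProductSpace

/-- Geometric data of a (finite or affine) root system with a choice of
positive and simple roots, inside a real inner product space. -/
structure RootSystemData (V : Type*) [NormedAddCommGroup V] [InnerProductSpace ℝ V] where
  roots : Set V
  pos : Set V
  simples : Set V
  simples_sub : simples ⊆ pos
  pos_sub : pos ⊆ roots
  ne_zero : ∀ α ∈ roots, α ≠ (0 : V)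
  eq_union : roots = pos ∪ (Neg.neg '' pos)
  not_both : ∀ α ∈ pos, -α ∉ pos

namespace RootSystemData

variable {V : Type*} [NormedAddCommGroup V] [InnerProductSpace ℝ V]
  [FiniteDimensional ℝ V]

/-- The orthogonal reflection in the hyperplane orthogonal to `α`. -/
noncomputable def srefl (α : V) : V ≃ₗᵢ[ℝ] V := Submodule.reflection (ℝ ∙ α)ᗮ

variable (R : RootSystemData V)

/-- The root system data is geometric: simple reflections permute the
positive roots other than the corresponding simple root, and the set of
roots is stable under all reflections in roots. -/
structure IsGeometric : Prop where
  simple_perm : ∀ α ∈ R.simples, ∀ β ∈ R.pos, β ≠ α → srefl α β ∈ R.pos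
  refl_stable : ∀ α ∈ R.roots, ∀ β ∈ R.roots, srefl α β ∈ R.roots
  pos_comb : ∀ α ∈ R.pos, α ∈ AddSubmonoid.closure R.simples

/-- The Weyl group: the group generated by the simple reflections. -/
noncomputable def W : Subgroup (V ≃ₗᵢ[ℝ] V) :=
  Subgroup.closure {g | ∃ α ∈ R.simples, g = srefl α}

/-- The inversion set `N(w) = {α ∈ Δ⁺ ∣ w⁻¹ α ∈ -Δ⁺}`. -/
def N (w : V ≃ₗᵢ[ℝ] V) : Set V := {α | α ∈ R.pos ∧ w⁻¹ α ∈ Neg.neg '' R.pos}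

/-- `l` is a word in the simple reflections representing `w`. -/
noncomputable def IsWord (l : List V) (w : V ≃ₗᵢ[ℝ] V) : Prop :=
  (∀ α ∈ l, α ∈ R.simples) ∧ w = (l.map srefl).prod

/-- The length of `w` : the least length of a word in the simple reflections
representing `w`. -/
noncomputable def length (w : V ≃ₗᵢ[ℝ] V) : ℕ :=
  sInf {n | ∃ l : List V, R.IsWord l w ∧ l.length = n}

/-- A reduced expression. -/
noncomputable def IsReduced (l : List V) (w : V ≃ₗᵢ[ℝ] V) : Prop :=
  R.IsWord l w ∧ l.length = R.length w

/-- The (left) weak Bruhat order: some reduced expression of `w₁` is an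
initial segment of a reduced expression of `w₂`. -/
noncomputable def weakLE (w₁ w₂ : V ≃ₗᵢ[ℝ] V) : Prop :=
  ∃ l₁ l₂ : List V, R.IsReduced l₁ w₁ ∧ R.IsReduced (l₁ ++ l₂) w₂

end RootSystemData

/-!
Let `ρ` pair to `1` with every simple coroot (half the sum of the positive roots will do).
For a long root `v` and a simple root `b`, either `s_b v = -v` or crystallographicity and `‖b‖ ≤ ‖v‖`
give `2⟪b, v⟫ / ‖v‖² ∈ {-1, 0, 1}`; so on long roots every simple reflection
changes `|⟪ρ, ·⟫|` by at most `‖v‖² / 2`, and `ℓ(y) · ‖α‖² / 2 ≥ ⟪ρ, θ⟫ - ⟪ρ, α⟫`. Conversely, as long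
as a long positive root `v` differs from `θ`, we have `⟪θ - v, v⟫ < 0`, so some simple root pairs
to `-‖v‖² / 2` with `v` and its reflection raises `⟪ρ, v⟫` by exactly `‖v‖² / 2`: this gives a word
of exactly that length. Finally `⟪ρ, θ∨⟫` is the sum of the coefficients of `θ∨`, and
`ℓ(y) = 2⟪ρ, θ⟫ / ‖θ‖² - 1 = g_R - 2`.
-/

lemma exists_mem_inner_neg_of_mem_closure {V : Type*} [NormedAddCommGroup V]
    [InnerProductSpace ℝ V] {s : Set V} {x v : V} (hx : x ∈ AddSubmonoid.closure s)
    (hxv : ⟪x, v⟫ < 0) : ∃ b ∈ s, ⟪b, v⟫ < 0 := by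
  induction hx using AddSubmonoid.closure_induction with
  | mem b hb => exact ⟨b, hb, hxv⟩
  | zero => simp at hxv
  | add y z _ _ hy hz =>
    rw [inner_add_left] at hxv
    by_cases h : ⟪y, v⟫ < 0
    · exact hy h
    · exact hz (by linarith)

namespace RootSystemData

variable {V : Type*} [NormedAddCommGroup V] [InnerProductSpace ℝ V]

lemma srefl_apply (β v : V) : srefl β v = v - (2 * ⟪β, v⟫ / ‖β‖ ^ 2) • β := by
  rw [srefl, Submodule.reflection_orthogonal_apply, Submodule.reflection_singleton_apply]
  simp only [RCLike.ofReal_real_eq_id, id_eq]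
  match_scalars <;> ring

lemma srefl_srefl (β v : V) : srefl β (srefl β v) = v := Submodule.reflection_reflection _ v

lemma srefl_inv (β : V) : (srefl β)⁻¹ = srefl β := Submodule.reflection_inv

lemma srefl_self {β : V} (hβ : β ≠ 0) : srefl β β = -β := by
  have h : ‖β‖ ^ 2 ≠ 0 := by positivity
  rw [srefl_apply, real_inner_self_eq_norm_sq, mul_div_assoc, div_self h]
  module

lemma srefl_neg (β : V) : srefl (-β) = srefl β := by
  ext v
  rw [srefl_apply, srefl_apply, norm_neg, inner_neg_left]
  module

variable {R : RootSystemData V}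

lemma simple_mem_roots {β : V} (hβ : β ∈ R.simples) : β ∈ R.roots :=
  R.pos_sub (R.simples_sub hβ)

lemma simple_ne_zero {β : V} (hβ : β ∈ R.simples) : β ≠ 0 :=
  R.ne_zero β (simple_mem_roots hβ)

lemma srefl_mapsTo_pos_diff_singleton (hR : R.IsGeometric) {β : V} (hβ : β ∈ R.simples) :
    Set.MapsTo (srefl β) (R.pos \ {β}) (R.pos \ {β}) := by
  rintro γ ⟨hγ, hγβ : γ ≠ β⟩
  refine ⟨hR.simple_perm β hβ γ hγ hγβ, fun h ↦ R.not_both β (R.simples_sub hβ) ?_⟩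
  have : γ = -β := by
    rw [← srefl_srefl β γ, Set.mem_singleton_iff.1 h, srefl_self (simple_ne_zero hβ)]
  exact this ▸ hγ

noncomputable def coroot (β : V) : V := (2 / ‖β‖ ^ 2) • β

/-- The `ρ` of the theory: it pairs to `1` with every simple coroot. -/
def IsWeylVector (R : RootSystemData V) (ρ : V) : Prop :=
  ∀ β ∈ R.simples, 2 * ⟪ρ, β⟫ = ‖β‖ ^ 2

lemma srefl_sum_pos (hR : R.IsGeometric) (hpos : R.pos.Finite) {β : V} (hβ : β ∈ R.simples) :
    srefl β (∑ γ ∈ hpos.toFinset, γ) = ∑ γ ∈ hpos.toFinset, γ - (2 : ℝ) • β := by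
  classical
  set P := hpos.toFinset
  have hβP : β ∈ P := hpos.mem_toFinset.2 (R.simples_sub hβ)
  have hperm : ∀ γ ∈ P.erase β, srefl β γ ∈ P.erase β := fun γ hγ ↦ by
    simpa [P, and_comm] using
      srefl_mapsTo_pos_diff_singleton hR hβ (by simpa [P, and_comm] using hγ)
  have hfix : ∑ γ ∈ P.erase β, srefl β γ = ∑ γ ∈ P.erase β, γ :=
    Finset.sum_nbij' (srefl β) (srefl β) hperm hperm (fun γ _ ↦ srefl_srefl β γ)
      (fun γ _ ↦ srefl_srefl β γ) (fun _ _ ↦ rfl)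
  rw [← Finset.add_sum_erase _ _ hβP, map_add, map_sum, hfix, srefl_self (simple_ne_zero hβ)]
  module

lemma exists_isWeylVector (hR : R.IsGeometric) (hfin : R.roots.Finite) :
    ∃ ρ, R.IsWeylVector ρ := by
  have hpos : R.pos.Finite := hfin.subset R.pos_sub
  refine ⟨(2 : ℝ)⁻¹ • ∑ γ ∈ hpos.toFinset, γ, fun β hβ ↦ ?_⟩
  have hβ0 : ‖β‖ ^ 2 ≠ 0 := by simp [simple_ne_zero hβ]
  have hcoeff : (2 * ⟪β, ∑ γ ∈ hpos.toFinset, γ⟫ / ‖β‖ ^ 2) • β = (2 : ℝ) • β := by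
    have h := srefl_sum_pos hR hpos hβ
    rw [srefl_apply] at h
    linear_combination (norm := module) -h
  have := smul_left_injective ℝ (simple_ne_zero hβ) hcoeff
  rw [div_eq_iff hβ0] at this
  rw [real_inner_smul_left, real_inner_comm]
  linarith

namespace IsWeylVector

variable {ρ : V} (hρ : R.IsWeylVector ρ)
include hρ

lemma inner_srefl {β : V} (hβ : β ∈ R.simples) (v : V) :
    ⟪ρ, srefl β v⟫ = ⟪ρ, v⟫ - ⟪β, v⟫ := by
  have hβ0 : ‖β‖ ^ 2 ≠ 0 := by simp [simple_ne_zero hβ]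
  rw [srefl_apply, inner_sub_right, real_inner_smul_right, sub_right_inj,
    div_mul_eq_mul_div, div_eq_iff hβ0]
  linear_combination ⟪β, v⟫ * hρ β hβ

lemma eq_zero_or_inner_pos {x : V} (hx : x ∈ AddSubmonoid.closure R.simples) :
    x = 0 ∨ 0 < ⟪ρ, x⟫ := by
  induction hx using AddSubmonoid.closure_induction with
  | mem β hβ =>
    have := hρ β hβ
    have : 0 < ‖β‖ ^ 2 := by simp [simple_ne_zero hβ]
    right; linarith
  | zero => left; rfl
  | add x y _ _ hx hy =>
    rw [inner_add_right]
    rcases hx with rfl | hx <;> rcases hy with rfl | hy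
    · left; simp
    · right; simpa using hy
    · right; simpa using hx
    · right; linarith

lemma inner_nonneg {x : V} (hx : x ∈ AddSubmonoid.closure R.simples) : 0 ≤ ⟪ρ, x⟫ := by
  rcases hρ.eq_zero_or_inner_pos hx with rfl | h
  · simp
  · exact h.le

lemma inner_coroot {β : V} (hβ : β ∈ R.simples) : ⟪ρ, coroot β⟫ = 1 := by
  have hβ0 : ‖β‖ ^ 2 ≠ 0 := by simp [simple_ne_zero hβ]
  rw [coroot, real_inner_smul_right, div_mul_eq_mul_div, hρ β hβ, div_self hβ0]

lemma inner_sum_coroot {s : Finset V} (hs : ∀ β ∈ s, β ∈ R.simples) (c : V → ℝ) :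
    ⟪ρ, ∑ β ∈ s, c β • coroot β⟫ = ∑ β ∈ s, c β := by
  simp only [inner_sum, real_inner_smul_right]
  exact Finset.sum_congr rfl fun β hβ ↦ by rw [hρ.inner_coroot (hs β hβ), mul_one]

end IsWeylVector

def IsCrystallographic (R : RootSystemData V) : Prop :=
  ∀ α ∈ R.roots, ∀ β ∈ R.roots, ∃ n : ℤ, 2 * ⟪α, β⟫ / ⟪α, α⟫ = (n : ℝ)

def IsLongRoot (R : RootSystemData V) (v : V) : Prop :=
  v ∈ R.roots ∧ ∀ β ∈ R.roots, ‖β‖ ≤ ‖v‖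

namespace IsLongRoot

variable {v : V} (hv : R.IsLongRoot v)
include hv

lemma srefl (hR : R.IsGeometric) {β : V} (hβ : β ∈ R.roots) : R.IsLongRoot (srefl β v) :=
  ⟨hR.refl_stable β hβ v hv.1, by simpa using hv.2⟩

lemma prod_apply (hR : R.IsGeometric) {l : List V} (hl : ∀ β ∈ l, β ∈ R.simples) :
    R.IsLongRoot ((l.map RootSystemData.srefl).prod v) := by
  induction l with
  | nil => simpa using hv
  | cons β l ih =>
    simp only [List.forall_mem_cons] at hl
    simpa using (ih hl.2).srefl hR (simple_mem_roots hl.1)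

/-- `2⟪b, v⟫ / ‖v‖²` is an integer `n`, and `‖b‖ ≤ ‖v‖` turns `n ≥ 2` (resp. `n ≤ -2`) into
`‖b - v‖² ≤ 0` (resp. `‖b + v‖² ≤ 0`). -/
lemma eq_or_eq_neg_or_inner_eq (hcrys : R.IsCrystallographic) {b : V} (hb : b ∈ R.roots) :
    b = v ∨ b = -v ∨ ∃ n : ℤ, |n| ≤ 1 ∧ ⟪b, v⟫ = n * (‖v‖ ^ 2 / 2) := by
  obtain ⟨n, hn⟩ := hcrys v hv.1 b hb
  have hv0 : 0 < ‖v‖ ^ 2 := by simp [R.ne_zero v hv.1]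
  have hbv : ⟪b, v⟫ = n * (‖v‖ ^ 2 / 2) := by
    rw [real_inner_self_eq_norm_sq, div_eq_iff hv0.ne'] at hn
    rw [real_inner_comm]; linarith
  have hbn : ‖b‖ ^ 2 ≤ ‖v‖ ^ 2 := by gcongr; exact hv.2 b hb
  by_cases hn2 : 2 ≤ n
  · left
    have h : ‖b - v‖ ^ 2 ≤ 0 := by
      have : (2 : ℝ) ≤ n := by exact_mod_cast hn2
      rw [norm_sub_sq_real, hbv]; nlinarith
    simpa [sub_eq_zero] using h
  by_cases hn2' : n ≤ -2
  · right; left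
    have h : ‖b + v‖ ^ 2 ≤ 0 := by
      have : (n : ℝ) ≤ -2 := by exact_mod_cast hn2'
      rw [norm_add_sq_real, hbv]; nlinarith
    simpa [add_eq_zero_iff_eq_neg] using h
  · right; right
    exact ⟨n, abs_le.2 ⟨by omega, by omega⟩, hbv⟩

lemma abs_inner_le_or_srefl_eq_neg (hcrys : R.IsCrystallographic) {b : V} (hb : b ∈ R.roots) :
    |⟪b, v⟫| ≤ ‖v‖ ^ 2 / 2 ∨ RootSystemData.srefl b v = -v := by
  rcases hv.eq_or_eq_neg_or_inner_eq hcrys hb with rfl | rfl | ⟨n, hn, hbv⟩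
  · exact .inr (srefl_self (R.ne_zero b hv.1))
  · exact .inr (by rw [srefl_neg, srefl_self (R.ne_zero v hv.1)])
  · left
    have hn' : |(n : ℝ)| ≤ 1 := by exact_mod_cast hn
    rw [hbv, abs_mul, abs_of_nonneg (by positivity : (0 : ℝ) ≤ ‖v‖ ^ 2 / 2)]
    exact mul_le_of_le_one_left (by positivity) hn'

lemma inner_eq_neg_half_of_neg (hcrys : R.IsCrystallographic) (hvpos : v ∈ R.pos) {b : V}
    (hb : b ∈ R.simples) (hbv : ⟪b, v⟫ < 0) : ⟪b, v⟫ = -(‖v‖ ^ 2 / 2) := by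
  rcases hv.eq_or_eq_neg_or_inner_eq hcrys (simple_mem_roots hb) with rfl | rfl | ⟨n, hn, h⟩
  · exact absurd hbv (not_lt.2 real_inner_self_nonneg)
  · exact absurd (by simpa using hvpos) (R.not_both _ (R.simples_sub hb))
  · have hv0 : 0 < ‖v‖ ^ 2 / 2 := by simp [R.ne_zero v hv.1]
    have hneg : n < 0 := by
      have : (n : ℝ) < 0 := by rw [h] at hbv; exact neg_of_mul_neg_left hbv hv0.le
      exact_mod_cast this
    obtain rfl : n = -1 := by have := abs_le.1 hn; omega
    rw [h]; push_cast; ring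

/-- `⟪θ - v, v⟫ < 0` because `θ ≠ v` have the same length, so some simple root occurring in
`θ - v` pairs negatively with `v`. -/
lemma exists_simple_srefl_mem_pos (hR : R.IsGeometric) (hcrys : R.IsCrystallographic)
    (hvpos : v ∈ R.pos) {θ : V} (hθv : ‖θ‖ = ‖v‖) (hne : θ ≠ v)
    (hθ : θ - v ∈ AddSubmonoid.closure R.simples) :
    ∃ b ∈ R.simples, RootSystemData.srefl b v ∈ R.pos ∧ ⟪b, v⟫ = -(‖v‖ ^ 2 / 2) := by
  have hsub : 0 < ‖θ - v‖ ^ 2 := by simp [sub_eq_zero, hne]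
  have hneg : ⟪θ - v, v⟫ < 0 := by
    rw [norm_sub_sq_real, hθv] at hsub
    rw [inner_sub_left, real_inner_self_eq_norm_sq]
    linarith
  obtain ⟨b, hb, hbv⟩ := exists_mem_inner_neg_of_mem_closure hθ hneg
  have hvb : v ≠ b := by rintro rfl; exact absurd hbv (not_lt.2 real_inner_self_nonneg)
  exact ⟨b, hb, hR.simple_perm b hb v hvpos hvb, hv.inner_eq_neg_half_of_neg hcrys hvpos hb hbv⟩

end IsLongRoot

namespace IsWeylVector

variable {ρ : V} (hρ : R.IsWeylVector ρ) (hcrys : R.IsCrystallographic)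
include hρ hcrys

lemma abs_inner_srefl_le {v : V} (hv : R.IsLongRoot v) {b : V} (hb : b ∈ R.simples) :
    |⟪ρ, srefl b v⟫| ≤ |⟪ρ, v⟫| + ‖v‖ ^ 2 / 2 := by
  rcases hv.abs_inner_le_or_srefl_eq_neg hcrys (simple_mem_roots hb) with h | h
  · rw [hρ.inner_srefl hb]
    exact (abs_sub _ _).trans (by gcongr)
  · rw [h, inner_neg_right, abs_neg]
    linarith [sq_nonneg ‖v‖]

lemma abs_inner_prod_apply_le (hR : R.IsGeometric) {v : V} (hv : R.IsLongRoot v) {l : List V}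
    (hl : ∀ b ∈ l, b ∈ R.simples) :
    |⟪ρ, (l.map srefl).prod v⟫| ≤ |⟪ρ, v⟫| + l.length * (‖v‖ ^ 2 / 2) := by
  induction l with
  | nil => simp
  | cons b l ih =>
    simp only [List.forall_mem_cons] at hl
    have hstep := hρ.abs_inner_srefl_le hcrys (hv.prod_apply hR hl.2) hl.1
    simp only [List.map_cons, List.prod_cons, LinearIsometryEquiv.coe_mul, Function.comp_apply,
      LinearIsometryEquiv.norm_map, List.length_cons, Nat.cast_succ] at hstep ⊢
    linarith [ih hl.2]

lemma exists_word_apply_eq (hR : R.IsGeometric) {v θ : V} (hv : R.IsLongRoot v)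
    (hvpos : v ∈ R.pos) (hθv : ‖θ‖ = ‖v‖)
    (hθ : ∀ a ∈ R.roots, θ - a ∈ AddSubmonoid.closure R.simples) :
    ∃ l : List V, (∀ b ∈ l, b ∈ R.simples) ∧ (l.map srefl).prod v = θ ∧
      l.length * (‖v‖ ^ 2 / 2) = ⟪ρ, θ⟫ - ⟪ρ, v⟫ := by
  -- induction on a bound for `⟪ρ, θ - v⟫`, which each step of `exists_simple_srefl_mem_pos`
  -- lowers by `‖θ‖² / 2`
  suffices H : ∀ n : ℕ, ∀ v, R.IsLongRoot v → v ∈ R.pos → ‖θ‖ = ‖v‖ →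
      ⟪ρ, θ⟫ - ⟪ρ, v⟫ ≤ n * (‖θ‖ ^ 2 / 2) →
      ∃ l : List V, (∀ b ∈ l, b ∈ R.simples) ∧ (l.map srefl).prod v = θ ∧
        l.length * (‖θ‖ ^ 2 / 2) = ⟪ρ, θ⟫ - ⟪ρ, v⟫ by
    have hA : 0 < ‖θ‖ ^ 2 / 2 := by simp [hθv, R.ne_zero v hv.1]
    obtain ⟨n, hn⟩ := exists_nat_ge ((⟪ρ, θ⟫ - ⟪ρ, v⟫) / (‖θ‖ ^ 2 / 2))
    simpa [hθv] using H n v hv hvpos hθv ((div_le_iff₀ hA).1 hn)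
  intro n
  induction n with
  | zero =>
    intro v hv hvpos hθv hle
    rcases hρ.eq_zero_or_inner_pos (hθ v hv.1) with h | h
    · exact ⟨[], by simp, by simp [(sub_eq_zero.1 h).symm], by simp [sub_eq_zero.1 h]⟩
    · rw [inner_sub_right] at h
      simp only [CharP.cast_eq_zero, zero_mul] at hle
      linarith
  | succ n ih =>
    intro v hv hvpos hθv hle
    by_cases hne : θ = v
    · exact ⟨[], by simp, by simp [hne], by simp [hne]⟩
    obtain ⟨b, hb, hbpos, hbv⟩ :=
      hv.exists_simple_srefl_mem_pos hR hcrys hvpos hθv hne (hθ v hv.1)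
    have hρb : ⟪ρ, srefl b v⟫ = ⟪ρ, v⟫ + ‖θ‖ ^ 2 / 2 := by
      rw [hρ.inner_srefl hb, hbv, hθv]; ring
    obtain ⟨l, hl, hlθ, hlen⟩ :=
      ih (srefl b v) (hv.srefl hR (simple_mem_roots hb)) hbpos (by simpa using hθv)
        (by push_cast at hle; linarith)
    refine ⟨l ++ [b], ?_, ?_, ?_⟩
    · simpa [or_imp, forall_and] using ⟨hl, hb⟩
    · simpa using hlθ
    · simp only [List.length_append, List.length_singleton, Nat.cast_add, Nat.cast_one]
      linarith

end IsWeylVector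

lemma prod_srefl_inv (l : List V) : (l.map srefl).prod⁻¹ = (l.reverse.map srefl).prod := by
  simp [List.prod_inv_reverse, Function.comp_def, srefl_inv]

lemma prod_mem_W {l : List V} (hl : ∀ b ∈ l, b ∈ R.simples) : (l.map srefl).prod ∈ R.W :=
  R.W.list_prod_mem fun _ h ↦ by
    obtain ⟨b, hb, rfl⟩ := List.mem_map.1 h
    exact Subgroup.subset_closure ⟨b, hl b hb, rfl⟩

lemma exists_isWord {w : V ≃ₗᵢ[ℝ] V} (hw : w ∈ R.W) : ∃ l, R.IsWord l w := by
  induction hw using Subgroup.closure_induction with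
  | mem w hw =>
    obtain ⟨b, hb, rfl⟩ := hw
    exact ⟨[b], by simpa using hb, by simp⟩
  | one => exact ⟨[], by simp, by simp⟩
  | mul w w' _ _ hw hw' =>
    obtain ⟨l, hl, rfl⟩ := hw
    obtain ⟨l', hl', rfl⟩ := hw'
    exact ⟨l ++ l', by simpa [or_imp, forall_and] using ⟨hl, hl'⟩, by simp⟩
  | inv w _ hw =>
    obtain ⟨l, hl, rfl⟩ := hw
    exact ⟨l.reverse, by simpa using hl, prod_srefl_inv l⟩

lemma exists_isReduced {w : V ≃ₗᵢ[ℝ] V} (hw : w ∈ R.W) : ∃ l, R.IsReduced l w := by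
  obtain ⟨l, hl⟩ := exists_isWord hw
  obtain ⟨l', hl', hlen⟩ :=
    Nat.sInf_mem (s := {n | ∃ l : List V, R.IsWord l w ∧ l.length = n}) ⟨l.length, l, hl, rfl⟩
  exact ⟨l', hl', hlen⟩

lemma length_le_of_isWord {l : List V} {w : V ≃ₗᵢ[ℝ] V} (h : R.IsWord l w) :
    R.length w ≤ l.length :=
  Nat.sInf_le ⟨l, h, rfl⟩

theorem length_mul_eq_inner_sub (hR : R.IsGeometric) (hcrys : R.IsCrystallographic) {ρ : V}
    (hρ : R.IsWeylVector ρ) {v θ : V} (hv : R.IsLongRoot v) (hvpos : v ∈ R.pos)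
    (hθ : ∀ a ∈ R.roots, θ - a ∈ AddSubmonoid.closure R.simples) {y : V ≃ₗᵢ[ℝ] V}
    (hyW : y ∈ R.W) (hyv : y v = θ) (hymin : ∀ z ∈ R.W, z v = θ → R.length y ≤ R.length z) :
    R.length y * (‖v‖ ^ 2 / 2) = ⟪ρ, θ⟫ - ⟪ρ, v⟫ := by
  have hθv : ‖θ‖ = ‖v‖ := by rw [← hyv, LinearIsometryEquiv.norm_map]
  obtain ⟨l, hl, hlθ, hllen⟩ := hρ.exists_word_apply_eq hcrys hR hv hvpos hθv hθ
  have hup : R.length y ≤ l.length :=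
    (hymin _ (prod_mem_W hl) hlθ).trans (length_le_of_isWord ⟨hl, rfl⟩)
  obtain ⟨m, ⟨hm, rfl⟩, hmlen⟩ := exists_isReduced hyW
  have hlow := hρ.abs_inner_prod_apply_le hcrys hR hv hm
  have hv0 : 0 ≤ ⟪ρ, v⟫ := hρ.inner_nonneg (hR.pos_comb v hvpos)
  have hvθ : ⟪ρ, v⟫ ≤ ⟪ρ, θ⟫ := by
    simpa [inner_sub_right] using hρ.inner_nonneg (hθ v hv.1)
  rw [hyv, abs_of_nonneg (hv0.trans hvθ), abs_of_nonneg hv0, hmlen] at hlow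
  have hA : 0 ≤ ‖v‖ ^ 2 / 2 := by positivity
  refine le_antisymm ?_ (by linarith)
  rw [← hllen]
  gcongr

end RootSystemData

open RootSystemData
open scoped RealInnerProductSpace

variable {V : Type*} [NormedAddCommGroup V] [InnerProductSpace ℝ V] [FiniteDimensional ℝ V]

theorem length_of_minimal_to_highest_root_general (R : RootSystemData V) (hR : R.IsGeometric)
    (hfin : R.roots.Finite)
    (hcrys : ∀ α ∈ R.roots, ∀ β ∈ R.roots, ∃ n : ℤ, 2 * ⟪α, β⟫ / ⟪α, α⟫ = (n : ℝ))
    (θ : V)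
    (hθhigh : ∀ α ∈ R.roots, θ - α ∈ AddSubmonoid.closure R.simples)
    (α : V) (hα : α ∈ R.simples) (hlong : ∀ β ∈ R.roots, ‖β‖ ≤ ‖α‖)
    (y : V ≃ₗᵢ[ℝ] V) (hy : y ∈ R.W ∧ y α = θ ∧
      ∀ z : V ≃ₗᵢ[ℝ] V, z ∈ R.W → z α = θ → R.length y ≤ R.length z)
    (hPi : R.simples.Finite) (c : V → ℝ)
    (hc : (2 / ‖θ‖ ^ 2) • θ =
      ∑ β ∈ hPi.toFinset, c β • ((2 / ‖β‖ ^ 2) • β)) :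
    (R.length y : ℝ) = (1 + ∑ β ∈ hPi.toFinset, c β) - 2 := by
  obtain ⟨hyW, hyα, hymin⟩ := hy
  obtain ⟨ρ, hρ⟩ := exists_isWeylVector hR hfin
  have hθα : ‖θ‖ = ‖α‖ := by rw [← hyα, LinearIsometryEquiv.norm_map]
  have hlen := length_mul_eq_inner_sub hR hcrys hρ ⟨simple_mem_roots hα, hlong⟩
    (R.simples_sub hα) hθhigh hyW hyα hymin
  have hc' : coroot θ = ∑ β ∈ hPi.toFinset, c β • coroot β := hc
  have hsum : ∑ β ∈ hPi.toFinset, c β = ⟪ρ, coroot θ⟫ := by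
    rw [hc', hρ.inner_sum_coroot fun β hβ ↦ hPi.mem_toFinset.1 hβ]
  have hα0 : ‖α‖ ≠ 0 := norm_ne_zero_iff.2 (simple_ne_zero hα)
  rw [hsum, coroot, real_inner_smul_right, hθα]
  field_simp
  linear_combination 2 * hlen - hρ α hα

/-- for a long simple root `α`, the minimal-length element `y` with
`y(α) = θ` satisfies `ℓ(y) = g_R − 2`, where `g_R = 1 + Σ c_{α∨}(θ∨)`. -/
theorem length_of_minimal_to_highest_root (R : RootSystemData V) (hR : R.IsGeometric)
    (hfin : R.roots.Finite)
    (hcrys : ∀ α ∈ R.roots, ∀ β ∈ R.roots, ∃ n : ℤ, 2 * ⟪α, β⟫ / ⟪α, α⟫ = (n : ℝ))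
    (hirr : ∀ S₁ S₂ : Set V, R.simples = S₁ ∪ S₂ →
      (∀ a ∈ S₁, ∀ b ∈ S₂, ⟪a, b⟫ = 0) → S₁ = ∅ ∨ S₂ = ∅)
    (θ : V) (hθpos : θ ∈ R.pos)
    (hθhigh : ∀ α ∈ R.roots, θ - α ∈ AddSubmonoid.closure R.simples)
    (α : V) (hα : α ∈ R.simples) (hlong : ∀ β ∈ R.roots, ‖β‖ ≤ ‖α‖)
    (y : V ≃ₗᵢ[ℝ] V) (hy : y ∈ R.W ∧ y α = θ ∧
      ∀ z : V ≃ₗᵢ[ℝ] V, z ∈ R.W → z α = θ → R.length y ≤ R.length z)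
    (hPi : R.simples.Finite) (c : V → ℝ)
    (hc : (2 / ‖θ‖ ^ 2) • θ =
      ∑ β ∈ hPi.toFinset, c β • ((2 / ‖β‖ ^ 2) • β)) :
    (R.length y : ℝ) = (1 + ∑ β ∈ hPi.toFinset, c β) - 2 :=
  length_of_minimal_to_highest_root_general R hR hfin hcrys θ hθhigh α hα hlong y hy hPi c hc
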